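/- For every integer k ≥ 2, every one-way LOCC channel from A to B is a k-extendible bipartite channel. -/

import Mathlib

open Matrix Kronecker
open scoped ComplexOrder

noncomputable section

/-- A quantum state: a positive semidefinite matrix with unit trace. -/
def IsState {n : Type} [Fintype n] (ρ : Matrix n n ℂ) : Prop :=
  ρ.PosSemidef ∧ ρ.trace = 1

/-- A pure quantum state: a rank-one projection onto a unit vector. -/
def IsPureState {n : Type} [Fintype n] (ρ : Matrix n n ℂ) : Prop :=
  ∃ v : n → ℂ, (∑ i, Complex.normSq (v i)) = 1 ∧ ρ = Matrix.vecMulVec v (star v)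

/-- The maximally entangled state `(1/|A|) ∑_{m,m'} |mm⟩⟨m'm'|` on `A ⊗ A`. -/
def maxEnt (A : Type) [Fintype A] [DecidableEq A] : Matrix (A × A) (A × A) ℂ :=
  Matrix.of fun p q => if p.1 = p.2 ∧ q.1 = q.2 then (1 : ℂ) / (Fintype.card A : ℂ) else 0

/-- The marginal of an operator on `A ⊗ B^{⊗ k}` obtained by tracing out all but the
first copy of `B`. -/
def marginalFirst {A B : Type} [Fintype B] [DecidableEq B] {k : ℕ} (hk : 0 < k)
    (ω : Matrix (A × (Fin k → B)) (A × (Fin k → B)) ℂ) :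
    Matrix (A × B) (A × B) ℂ :=
  Matrix.of fun p q => ∑ f : Fin k → B,
    if f ⟨0, hk⟩ = p.2 then ω (p.1, f) (q.1, Function.update f ⟨0, hk⟩ q.2) else 0

/-- Conjugation `W^π ω (W^π)†` of an operator on `A ⊗ B^{⊗ k}` by the unitary permuting
the `k` copies of `B` according to `π`. -/
def permAction {A B : Type} {k : ℕ} (π : Equiv.Perm (Fin k))
    (ω : Matrix (A × (Fin k → B)) (A × (Fin k → B)) ℂ) :
    Matrix (A × (Fin k → B)) (A × (Fin k → B)) ℂ :=
  Matrix.of fun p q => ω (p.1, p.2 ∘ π) (q.1, q.2 ∘ π)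

/-- A bipartite state (or operator) `ρ` on `A ⊗ B` is `k`-extendible with respect to `B`
if it has a permutation-invariant state extension on `A ⊗ B^{⊗ k}`. -/
def kExtendible {A B : Type} [Fintype A] [Fintype B] [DecidableEq B]
    (k : ℕ) (hk : 2 ≤ k) (ρ : Matrix (A × B) (A × B) ℂ) : Prop :=
  ∃ ω : Matrix (A × (Fin k → B)) (A × (Fin k → B)) ℂ,
    IsState ω ∧ (∀ π : Equiv.Perm (Fin k), permAction π ω = ω) ∧
      marginalFirst (show 0 < k by omega) ω = ρ

/-- The tensor extension `id_R ⊗ Φ` of a linear map on matrices. -/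
def tensorId (R : Type) {A B : Type} [Fintype A] [Fintype B]
    (Φ : Matrix A A ℂ →ₗ[ℂ] Matrix B B ℂ) :
    Matrix (R × A) (R × A) ℂ →ₗ[ℂ] Matrix (R × B) (R × B) ℂ where
  toFun X := Matrix.of fun p q => Φ (Matrix.of fun i j => X (p.1, i) (q.1, j)) p.2 q.2
  map_add' X Y := by
    ext p q
    have h : (Matrix.of fun i j => (X + Y) (p.1, i) (q.1, j))
        = (Matrix.of fun i j => X (p.1, i) (q.1, j))
          + (Matrix.of fun i j => Y (p.1, i) (q.1, j)) := rfl
    show Φ (Matrix.of fun i j => (X + Y) (p.1, i) (q.1, j)) p.2 q.2 = _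
    rw [h, map_add]
    rfl
  map_smul' c X := by
    ext p q
    have h : (Matrix.of fun i j => (c • X) (p.1, i) (q.1, j))
        = c • (Matrix.of fun i j => X (p.1, i) (q.1, j)) := rfl
    show Φ (Matrix.of fun i j => (c • X) (p.1, i) (q.1, j)) p.2 q.2 = _
    rw [h, _root_.map_smul]
    rfl

/-- Complete positivity of a linear map on matrices. -/
def IsCP {A B : Type} [Fintype A] [Fintype B]
    (Φ : Matrix A A ℂ →ₗ[ℂ] Matrix B B ℂ) : Prop :=
  ∀ (R : Type) [Fintype R] (X : Matrix (R × A) (R × A) ℂ),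
    X.PosSemidef → ((tensorId R Φ) X).PosSemidef

/-- A quantum channel: a completely positive trace-preserving linear map. -/
def IsCPTP {A B : Type} [Fintype A] [Fintype B]
    (Φ : Matrix A A ℂ →ₗ[ℂ] Matrix B B ℂ) : Prop :=
  IsCP Φ ∧ ∀ X : Matrix A A ℂ, (Φ X).trace = X.trace

/-- A bipartite channel `N : AB → A'B'` is `k`-extendible if it is a channel and has a
channel extension `M : A B^{⊗k} → A' B'^{⊗k}` whose marginal on the first `B'` copy
reproduces `N` on the corresponding marginal input state, and which is covariant with
respect to simultaneous permutations of the `k` input and output `B` factors. -/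
def kExtendibleChannel {A B A' B' : Type} [Fintype A] [Fintype B] [DecidableEq B]
    [Fintype A'] [Fintype B'] [DecidableEq B']
    (k : ℕ) (hk : 2 ≤ k)
    (N : Matrix (A × B) (A × B) ℂ →ₗ[ℂ] Matrix (A' × B') (A' × B') ℂ) : Prop :=
  IsCPTP N ∧
  ∃ M : Matrix (A × (Fin k → B)) (A × (Fin k → B)) ℂ →ₗ[ℂ]
      Matrix (A' × (Fin k → B')) (A' × (Fin k → B')) ℂ,
    IsCPTP M ∧
    (∀ θ, IsState θ →
      marginalFirst (show 0 < k by omega) (M θ)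
        = N (marginalFirst (show 0 < k by omega) θ)) ∧
    (∀ (π : Equiv.Perm (Fin k)) θ, M (permAction π θ) = permAction π (M θ))

/-- The ε-hypothesis-testing divergence `D_h^ε(ρ‖σ)`, valued in the extended reals. -/
def DH {n : Type} [Fintype n] [DecidableEq n] (ε : ℝ) (ρ σ : Matrix n n ℂ) : EReal :=
  let β : ℝ := sInf { x : ℝ | ∃ Λ : Matrix n n ℂ, Λ.PosSemidef ∧ (1 - Λ).PosSemidef ∧
      1 - ε ≤ ((Λ * ρ).trace).re ∧ x = ((Λ * σ).trace).re }
  if β ≤ 0 then ⊤ else (((- Real.logb 2 β) : ℝ) : EReal)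

/-- The k-unextendible ε-hypothesis-testing divergence
`E_k^ε(A;B)_ρ = inf {D_h^ε(ρ‖σ) : σ k-extendible state}`. -/
def EkEps {A B : Type} [Fintype A] [DecidableEq A] [Fintype B] [DecidableEq B]
    (k : ℕ) (hk : 2 ≤ k) (ε : ℝ) (ρ : Matrix (A × B) (A × B) ℂ) : EReal :=
  sInf { x : EReal | ∃ σ : Matrix (A × B) (A × B) ℂ,
    IsState σ ∧ kExtendible k hk σ ∧ x = DH ε ρ σ }

/-- The max-relative entropy `D_max(ρ‖σ) = inf {λ : ρ ≤ 2^λ σ}`, valued in the extended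
reals (equal to `⊤` when the support condition fails). -/
def Dmax {n : Type} [Fintype n] (ρ σ : Matrix n n ℂ) : EReal :=
  sInf { x : EReal | ∃ lam : ℝ, x = (lam : EReal) ∧
    ((((2 : ℝ) ^ lam : ℝ) : ℂ) • σ - ρ).PosSemidef }

/-- The k-unextendible max-relative entropy of a bipartite state:
`E_k^max(A;B)_ρ = inf {D_max(ρ‖σ) : σ k-extendible state}`. -/
def EkMaxState {A B : Type} [Fintype A] [Fintype B] [DecidableEq B]
    (k : ℕ) (hk : 2 ≤ k) (ρ : Matrix (A × B) (A × B) ℂ) : EReal :=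
  sInf { x : EReal | ∃ σ : Matrix (A × B) (A × B) ℂ,
    IsState σ ∧ kExtendible k hk σ ∧ x = Dmax ρ σ }

/-- The k-unextendible max-relative entropy of a channel `N : A → B`:
`E_k^max(N) = sup_ψ E_k^max(R;B)_{(id ⊗ N)(ψ)}` over pure inputs `ψ_{RA}` with `R ≅ A`. -/
def EkMaxChannel {A B : Type} [Fintype A] [Fintype B] [DecidableEq B]
    (k : ℕ) (hk : 2 ≤ k) (N : Matrix A A ℂ →ₗ[ℂ] Matrix B B ℂ) : EReal :=
  sSup { x : EReal | ∃ ψ : Matrix (A × A) (A × A) ℂ, IsPureState ψ ∧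
    x = EkMaxState k hk (tensorId A N ψ) }

/-- The positive semidefinite square root of a positive semidefinite matrix
(the definition removed from Mathlib, restored verbatim). -/
def Matrix.PosSemidef.sqrt {n 𝕜 : Type*} [Fintype n] [DecidableEq n] [RCLike 𝕜]
    {A : Matrix n n 𝕜} (hA : A.PosSemidef) : Matrix n n 𝕜 :=
  hA.1.eigenvectorUnitary.1 * diagonal ((↑) ∘ (√·) ∘ hA.1.eigenvalues) *
  (star hA.1.eigenvectorUnitary : Matrix n n 𝕜)

open scoped Classical in
/-- The fidelity `F(ρ,σ) = ‖√ρ √σ‖₁² = (Tr √((√ρ√σ)† (√ρ√σ)))²`. -/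
def fidelity {n : Type} [Fintype n] [DecidableEq n] (ρ σ : Matrix n n ℂ) : ℝ :=
  if h : ρ.PosSemidef ∧ σ.PosSemidef then
    (((Matrix.posSemidef_conjTranspose_mul_self (h.1.sqrt * h.2.sqrt)).sqrt).trace.re) ^ 2
  else 0

/-- Reshuffling `(X ⊗ Y) ⊗ Z ≃ (X ⊗ Z) ⊗ Y`. -/
def assocShuffle (X Y Z : Type) : (X × Y) × Z ≃ (X × Z) × Y where
  toFun p := ((p.1.1, p.2), p.1.2)
  invFun p := ((p.1.1, p.2), p.1.2)
  left_inv _ := rfl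
  right_inv _ := rfl

/-- Reshuffling `(X ⊗ Z) ⊗ W ≃ X ⊗ (W ⊗ Z)`. -/
def outShuffle (X Z W : Type) : (X × Z) × W ≃ X × (W × Z) where
  toFun p := (p.1.1, (p.2, p.1.2))
  invFun p := ((p.1, p.2.2), p.2.1)
  left_inv _ := rfl
  right_inv _ := rfl

/-- Application of the channel `N : A → B` to the `A` factor of an operator on
`(X ⊗ A) ⊗ Z`, producing an operator on `X ⊗ (B ⊗ Z)`. -/
def channelStep (X Z : Type) [Fintype X] [Fintype Z] {A B : Type} [Fintype A] [Fintype B]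
    (N : Matrix A A ℂ →ₗ[ℂ] Matrix B B ℂ)
    (ρ : Matrix ((X × A) × Z) ((X × A) × Z) ℂ) :
    Matrix (X × (B × Z)) (X × (B × Z)) ℂ :=
  (Matrix.reindex (outShuffle X Z B) (outShuffle X Z B))
    ((tensorId (X × Z) N)
      ((Matrix.reindex (assocShuffle X A Z) (assocShuffle X A Z)) ρ))

/-- A separable bipartite state: a convex combination of product states. -/
def Separable {A B : Type} [Fintype A] [Fintype B]
    (σ : Matrix (A × B) (A × B) ℂ) : Prop :=
  ∃ (m : ℕ) (p : Fin m → ℝ) (τ : Fin m → Matrix A A ℂ) (ω : Fin m → Matrix B B ℂ),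
    (∀ x, 0 ≤ p x) ∧ (∑ x, p x = 1) ∧ (∀ x, IsState (τ x)) ∧ (∀ x, IsState (ω x)) ∧
      σ = ∑ x, ((p x : ℂ) • (τ x ⊗ₖ ω x))

/-- The tensor product `E ⊗ F` of two linear maps on matrices. -/
def tensorMap {A B A' B' : Type} [Fintype A] [Fintype B] [Fintype A'] [Fintype B']
    (E : Matrix A A ℂ →ₗ[ℂ] Matrix A' A' ℂ)
    (F : Matrix B B ℂ →ₗ[ℂ] Matrix B' B' ℂ) :
    Matrix (A × B) (A × B) ℂ →ₗ[ℂ] Matrix (A' × B') (A' × B') ℂ :=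
  (Matrix.reindexLinearEquiv ℂ ℂ (Equiv.prodComm B' A') (Equiv.prodComm B' A')).toLinearMap
    ∘ₗ (tensorId B' E)
    ∘ₗ (Matrix.reindexLinearEquiv ℂ ℂ (Equiv.prodComm A B') (Equiv.prodComm A B')).toLinearMap
    ∘ₗ (tensorId A F)

/-- A one-way LOCC channel from Alice to Bob: `L = ∑_y E^y ⊗ F^y` with `{E^y}` a quantum
instrument on Alice's side and each `F^y` a channel on Bob's side. -/
def IsOneWayLOCC {A B A' B' : Type} [Fintype A] [Fintype B] [Fintype A'] [Fintype B']
    (L : Matrix (A × B) (A × B) ℂ →ₗ[ℂ] Matrix (A' × B') (A' × B') ℂ) : Prop :=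
  ∃ (m : ℕ) (E : Fin m → (Matrix A A ℂ →ₗ[ℂ] Matrix A' A' ℂ))
      (F : Fin m → (Matrix B B ℂ →ₗ[ℂ] Matrix B' B' ℂ)),
    (∀ y, IsCP (E y)) ∧ (∀ X : Matrix A A ℂ, (∑ y, (E y) X).trace = X.trace) ∧
    (∀ y, IsCPTP (F y)) ∧ L = ∑ y, tensorMap (E y) (F y)

end

lemma psdSqrt_conjTranspose {n : Type} [Fintype n] [DecidableEq n] {M : Matrix n n ℂ}
    (hM : M.PosSemidef) : (hM.sqrt)ᴴ = hM.sqrt := by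
  unfold Matrix.PosSemidef.sqrt
  rw [conjTranspose_mul, conjTranspose_mul, diagonal_conjTranspose, Matrix.mul_assoc]
  congr 2
  · simp [Matrix.star_eq_conjTranspose]
  · congr 1
    funext i
    simp [RCLike.conj_ofReal]
lemma psdSqrt_mul_self {n : Type} [Fintype n] [DecidableEq n] {M : Matrix n n ℂ}
    (hM : M.PosSemidef) : hM.sqrt * hM.sqrt = M := by
  unfold Matrix.PosSemidef.sqrt
  set U : Matrix n n ℂ := hM.1.eigenvectorUnitary.1
  have hU : star U * U = 1 := Unitary.star_mul_self_of_mem hM.1.eigenvectorUnitary.2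
  have key : U * diagonal (RCLike.ofReal ∘ (√·) ∘ hM.1.eigenvalues) * star U *
      (U * diagonal (RCLike.ofReal ∘ (√·) ∘ hM.1.eigenvalues) * star U)
      = U * (diagonal (RCLike.ofReal ∘ (√·) ∘ hM.1.eigenvalues) * diagonal (RCLike.ofReal ∘ (√·) ∘ hM.1.eigenvalues)) * star U := by
    simp only [Matrix.mul_assoc]
    rw [← Matrix.mul_assoc (star U) U, hU, Matrix.one_mul]
  rw [key, diagonal_mul_diagonal]
  conv_rhs => rw [hM.1.spectral_theorem]
  rw [Unitary.conjStarAlgAut_apply]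
  congr 2
  congr 1
  funext i
  simp only [Function.comp_apply]
  rw [← RCLike.ofReal_mul, Real.mul_self_sqrt (hM.eigenvalues_nonneg i)]

set_option linter.unusedSectionVars false

noncomputable section AuxKraus

open Matrix

variable {A A' : Type} [Fintype A] [DecidableEq A] [Fintype A']

lemma trace_stdB (i j : A) :
    (Matrix.single i j (1 : ℂ)).trace = if i = j then 1 else 0 := by
  classical
  simp only [Matrix.trace, Matrix.diag, Matrix.single, Matrix.of_apply]
  by_cases h : i = j
  · subst h; simp
  · simp only [h, if_false]
    rw [Finset.sum_eq_zero]
    intro a _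
    rw [if_neg]
    rintro ⟨rfl, rfl⟩
    exact h rfl

lemma map_eq_sum (Φ : Matrix A A ℂ →ₗ[ℂ] Matrix A' A' ℂ) (X : Matrix A A ℂ) :
    Φ X = ∑ i, ∑ j, X i j • Φ (Matrix.single i j 1) := by
  conv_lhs => rw [Matrix.matrix_eq_sum_single X]
  rw [map_sum]
  refine Finset.sum_congr rfl fun i _ => ?_
  rw [map_sum]
  refine Finset.sum_congr rfl fun j _ => ?_
  rw [← _root_.map_smul, Matrix.smul_single, smul_eq_mul, mul_one]

omit [DecidableEq A] in
lemma sandwich_apply (K : Matrix A' A ℂ) (X : Matrix A A ℂ) (a b : A') :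
    (K * X * Kᴴ) a b = ∑ i, ∑ j, K a i * X i j * (starRingEnd ℂ) (K b j) := by
  simp only [Matrix.mul_apply, Matrix.conjTranspose_apply, Finset.sum_mul]
  rw [Finset.sum_comm]
  simp [Matrix.star_apply]

lemma posSemidef_sum {n ι : Type} [Fintype n] (s : Finset ι) (f : ι → Matrix n n ℂ)
    (h : ∀ i ∈ s, (f i).PosSemidef) : (∑ i ∈ s, f i).PosSemidef := by
  classical
  induction s using Finset.induction_on with
  | empty => simpa using Matrix.PosSemidef.zero
  | insert _ _ hx ih =>
      rename_i a s
      rw [Finset.sum_insert hx]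
      exact ((h a (Finset.mem_insert_self a s)).add
        (ih fun i hi => h i (Finset.mem_insert_of_mem hi)))

end AuxKraus
noncomputable section AuxKraus2

open Matrix

variable {A A' : Type} [Fintype A] [DecidableEq A] [Fintype A']

/-- A Kraus representation of a linear map on matrices. -/
def HasKraus (Φ : Matrix A A ℂ →ₗ[ℂ] Matrix A' A' ℂ) : Prop :=
  ∃ (ι : Type) (_ : Fintype ι) (K : ι → Matrix A' A ℂ),
    ∀ X, Φ X = ∑ w, K w * X * (K w)ᴴ

omit [DecidableEq A] in
lemma tensorId_apply (R : Type) [Fintype R] (Φ : Matrix A A ℂ →ₗ[ℂ] Matrix A' A' ℂ)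
    (X : Matrix (R × A) (R × A) ℂ) (p q : R × A') :
    (tensorId R Φ) X p q = Φ (Matrix.of fun i j => X (p.1, i) (q.1, j)) p.2 q.2 := rfl

omit [DecidableEq A] in
lemma HasKraus.isCP {Φ : Matrix A A ℂ →ₗ[ℂ] Matrix A' A' ℂ} (h : HasKraus Φ) :
    IsCP Φ := by
  classical
  obtain ⟨ι, _, K, hK⟩ := h
  intro R _ X hX
  have key : (tensorId R Φ) X
      = ∑ w, (Matrix.of fun (p : R × A') (q : R × A) =>
          if p.1 = q.1 then K w p.2 q.2 else 0) * X *
        (Matrix.of fun (p : R × A') (q : R × A) =>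
          if p.1 = q.1 then K w p.2 q.2 else 0)ᴴ := by
    ext p q
    rw [Matrix.sum_apply]
    simp only [sandwich_apply, Matrix.of_apply]
    rw [tensorId_apply, hK, Matrix.sum_apply]
    refine Finset.sum_congr rfl fun w _ => ?_
    rw [sandwich_apply]
    rw [Fintype.sum_prod_type]
    rw [Finset.sum_eq_single p.1
      (fun r _ hr => Finset.sum_eq_zero fun i _ => Finset.sum_eq_zero fun j _ => by
        rw [if_neg fun hh => hr hh.symm, zero_mul, zero_mul])
      (fun hmem => absurd (Finset.mem_univ _) hmem)]
    simp only [if_pos rfl, if_true]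
    refine Finset.sum_congr rfl fun i _ => ?_
    rw [Fintype.sum_prod_type]
    rw [Finset.sum_eq_single q.1
      (fun r _ hr => Finset.sum_eq_zero fun j _ => by
        rw [if_neg (show ¬ q.1 = r from fun hh => hr hh.symm), map_zero, mul_zero])
      (fun hmem => absurd (Finset.mem_univ _) hmem)]
    simp only [Matrix.of_apply, if_pos rfl, if_true]
  rw [key]
  exact posSemidef_sum _ _ fun w _ => hX.mul_mul_conjTranspose_same _

end AuxKraus2
noncomputable section AuxChoi

open Matrix

variable {A A' : Type} [Fintype A] [DecidableEq A] [Fintype A']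

lemma IsCP.hasKraus {Φ : Matrix A A ℂ →ₗ[ℂ] Matrix A' A' ℂ} (h : IsCP Φ) :
    HasKraus Φ := by
  classical
  -- the (unnormalized) maximally entangled state as Cᴴ * C
  set C0 : Matrix Unit (A × A) ℂ := Matrix.of fun _ p => if p.1 = p.2 then 1 else 0 with hC0
  have hΩpsd : (C0ᴴ * C0).PosSemidef := Matrix.posSemidef_conjTranspose_mul_self C0
  have hChoi : ((tensorId A Φ) (C0ᴴ * C0)).PosSemidef := h A _ hΩpsd
  set C := hChoi.sqrt with hC
  have hherm : Cᴴ = C := psdSqrt_conjTranspose hChoi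
  have hCC : C * C = (tensorId A Φ) (C0ᴴ * C0) := psdSqrt_mul_self hChoi
  -- the Choi matrix entries are the entries of Φ on standard basis matrices
  have hslice : ∀ i j : A, (Matrix.of fun u v => (C0ᴴ * C0) ((i, u)) ((j, v)))
      = Matrix.single i j (1 : ℂ) := by
    intro i j
    ext u v
    simp only [Matrix.of_apply, Matrix.mul_apply, Matrix.conjTranspose_apply, hC0,
      Matrix.single, Fintype.sum_unique]
    by_cases h1 : i = u <;> by_cases h2 : j = v <;>
      simp [h1, h2, apply_ite (starRingEnd ℂ)]
  have hkey : ∀ (i j : A) (a b : A'), Φ (Matrix.single i j 1) a b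
      = ∑ w : A × A', (starRingEnd ℂ) (C w (i, a)) * C w (j, b) := by
    intro i j a b
    have h1 : Φ (Matrix.single i j 1) a b = (C * C) ((i, a)) ((j, b)) := by
      rw [hCC, tensorId_apply, hslice]
    rw [h1, Matrix.mul_apply]
    refine Finset.sum_congr rfl fun w _ => ?_
    congr 1
    have hw := congrFun (congrFun hherm (i, a)) w
    rw [Matrix.conjTranspose_apply] at hw
    rw [starRingEnd_apply, ← hw]
  refine ⟨A × A', inferInstance, fun w => Matrix.of fun a i => (starRingEnd ℂ) (C w (i, a)),
    fun X => ?_⟩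
  ext a b
  rw [map_eq_sum Φ X]
  simp only [Matrix.sum_apply, Matrix.smul_apply, smul_eq_mul, sandwich_apply]
  conv_rhs => rw [Finset.sum_comm]
  refine Finset.sum_congr rfl fun i _ => ?_
  conv_rhs => rw [Finset.sum_comm]
  refine Finset.sum_congr rfl fun j _ => ?_
  rw [hkey i j a b, Finset.mul_sum]
  refine Finset.sum_congr rfl fun w _ => ?_
  simp only [Matrix.of_apply, starRingEnd_apply, star_star]
  ring
noncomputable section AuxKrausLin

open Matrix

variable {A A' : Type} [Fintype A] [DecidableEq A] [Fintype A']

lemma kraus_stdB {ι : Type} [Fintype ι] {Φ : Matrix A A ℂ →ₗ[ℂ] Matrix A' A' ℂ}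
    {K : ι → Matrix A' A ℂ} (hK : ∀ X, Φ X = ∑ w, K w * X * (K w)ᴴ)
    (i j : A) (a b : A') :
    Φ (Matrix.single i j 1) a b
      = ∑ w, K w a i * (starRingEnd ℂ) (K w b j) := by
  rw [hK, Matrix.sum_apply]
  refine Finset.sum_congr rfl fun w _ => ?_
  rw [sandwich_apply]
  rw [Finset.sum_eq_single i
    (fun r _ hr => Finset.sum_eq_zero fun s _ => by
      simp [Matrix.single, Ne.symm hr])
    (fun hmem => absurd (Finset.mem_univ _) hmem)]
  rw [Finset.sum_eq_single j
    (fun s _ hs => by simp [Matrix.single, Ne.symm hs])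
    (fun hmem => absurd (Finset.mem_univ _) hmem)]
  simp [Matrix.single]

/-- The linear map with given Kraus operators. -/
def krausLin {ι : Type} [Fintype ι] (K : ι → Matrix A' A ℂ) :
    Matrix A A ℂ →ₗ[ℂ] Matrix A' A' ℂ where
  toFun X := ∑ w, K w * X * (K w)ᴴ
  map_add' X Y := by
    simp [Matrix.mul_add, Matrix.add_mul, Finset.sum_add_distrib]
  map_smul' c X := by
    simp [Finset.smul_sum, Matrix.mul_smul, Matrix.smul_mul]

lemma krausLin_hasKraus {ι : Type} [Fintype ι] (K : ι → Matrix A' A ℂ) :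
    HasKraus (krausLin K) := ⟨ι, inferInstance, K, fun _ => rfl⟩

/-- two linear maps on matrices agreeing on standard basis matrices agree. -/
lemma eq_of_stdB {Φ Ψ : Matrix A A ℂ →ₗ[ℂ] Matrix A' A' ℂ}
    (h : ∀ i j, Φ (Matrix.single i j 1) = Ψ (Matrix.single i j 1)) :
    ∀ X, Φ X = Ψ X := by
  intro X
  rw [map_eq_sum Φ X, map_eq_sum Ψ X]
  exact Finset.sum_congr rfl fun i _ => Finset.sum_congr rfl fun j _ => by rw [h i j]

lemma trace_eq_of_stdB {Φ : Matrix A A ℂ →ₗ[ℂ] Matrix A' A' ℂ}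
    (h : ∀ i j, (Φ (Matrix.single i j 1)).trace
        = (Matrix.single i j (1 : ℂ)).trace) :
    ∀ X, (Φ X).trace = X.trace := by
  intro X
  rw [map_eq_sum Φ X]
  simp only [Matrix.trace_sum, Matrix.trace_smul, h]
  conv_rhs => rw [Matrix.matrix_eq_sum_single X]
  simp only [Matrix.trace_sum]
  refine Finset.sum_congr rfl fun i _ => Finset.sum_congr rfl fun j _ => ?_
  rw [show Matrix.single i j (X i j) = X i j • Matrix.single i j 1 by
    rw [Matrix.smul_single, smul_eq_mul, mul_one], Matrix.trace_smul]

end AuxKrausLin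
noncomputable section AuxCP

open Matrix

variable {A B A' B' : Type} [Fintype A] [Fintype B] [Fintype A'] [Fintype B']

lemma IsCP.comp {Φ : Matrix B B ℂ →ₗ[ℂ] Matrix A' A' ℂ}
    {Ψ : Matrix A A ℂ →ₗ[ℂ] Matrix B B ℂ} (hΦ : IsCP Φ) (hΨ : IsCP Ψ) :
    IsCP (Φ ∘ₗ Ψ) := by
  intro R _ X hX
  have : (tensorId R (Φ ∘ₗ Ψ)) X = (tensorId R Φ) ((tensorId R Ψ) X) := rfl
  rw [this]
  exact hΦ R _ (hΨ R X hX)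

lemma IsCP.tensorId (S : Type) [Fintype S] {Φ : Matrix A A ℂ →ₗ[ℂ] Matrix A' A' ℂ}
    (hΦ : IsCP Φ) : IsCP (tensorId S Φ) := by
  intro R _ X hX
  have key : (_root_.tensorId R (_root_.tensorId S Φ)) X
      = ((_root_.tensorId (R × S) Φ)
          (X.submatrix (fun z : (R × S) × A => (z.1.1, (z.1.2, z.2)))
            (fun z : (R × S) × A => (z.1.1, (z.1.2, z.2))))).submatrix
          (fun z : R × (S × A') => ((z.1, z.2.1), z.2.2))
          (fun z : R × (S × A') => ((z.1, z.2.1), z.2.2)) := rfl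
  rw [key]
  exact (hΦ (R × S) _ (hX.submatrix _)).submatrix _

lemma isCP_reindex (e : A ≃ A') :
    IsCP (Matrix.reindexLinearEquiv ℂ ℂ e e).toLinearMap := by
  intro R _ X hX
  have key : (tensorId R (Matrix.reindexLinearEquiv ℂ ℂ e e).toLinearMap) X
      = X.submatrix (fun z : R × A' => (z.1, e.symm z.2))
          (fun z : R × A' => (z.1, e.symm z.2)) := rfl
  rw [key]
  exact hX.submatrix _

lemma IsCP.tensorMap {E : Matrix A A ℂ →ₗ[ℂ] Matrix A' A' ℂ}
    {F : Matrix B B ℂ →ₗ[ℂ] Matrix B' B' ℂ} (hE : IsCP E) (hF : IsCP F) :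
    IsCP (tensorMap E F) :=
  ((isCP_reindex (Equiv.prodComm B' A')).comp
    ((hE.tensorId B').comp
      ((isCP_reindex (Equiv.prodComm A B')).comp (hF.tensorId A))))

lemma isCP_sum {ι : Type} (s : Finset ι)
    (Φ : ι → (Matrix A A ℂ →ₗ[ℂ] Matrix A' A' ℂ))
    (h : ∀ y ∈ s, IsCP (Φ y)) : IsCP (∑ y ∈ s, Φ y) := by
  intro R _ X hX
  have key : (tensorId R (∑ y ∈ s, Φ y)) X = ∑ y ∈ s, (tensorId R (Φ y)) X := by
    ext p q
    rw [tensorId_apply]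
    simp only [LinearMap.coe_sum, LinearMap.sum_apply, Matrix.sum_apply]
    rfl
  rw [key]
  exact posSemidef_sum _ _ fun y hy => h y hy R X hX

lemma tensorMap_app [DecidableEq A] [DecidableEq B]
    (E : Matrix A A ℂ →ₗ[ℂ] Matrix A' A' ℂ) (F : Matrix B B ℂ →ₗ[ℂ] Matrix B' B' ℂ)
    (ρ : Matrix (A × B) (A × B) ℂ) (a a' : A') (b b' : B') :
    tensorMap E F ρ (a, b) (a', b')
      = ∑ i, ∑ j, ∑ p, ∑ q, ρ (i, p) (j, q)
          * (F (Matrix.single p q 1) b b' * E (Matrix.single i j 1) a a') := by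
  have h0 : tensorMap E F ρ (a, b) (a', b')
      = E (Matrix.of fun i j =>
          F (Matrix.of fun p q => ρ (i, p) (j, q)) b b') a a' := rfl
  rw [h0, map_eq_sum E, Matrix.sum_apply]
  refine Finset.sum_congr rfl fun i _ => ?_
  rw [Matrix.sum_apply]
  refine Finset.sum_congr rfl fun j _ => ?_
  rw [Matrix.smul_apply, smul_eq_mul, Matrix.of_apply, map_eq_sum F, Matrix.sum_apply]
  rw [Finset.sum_mul]
  refine Finset.sum_congr rfl fun p _ => ?_
  rw [Matrix.sum_apply, Finset.sum_mul]
  refine Finset.sum_congr rfl fun q _ => ?_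
  rw [Matrix.smul_apply, smul_eq_mul, Matrix.of_apply]
  ring

end AuxCP
noncomputable section AuxTM

open Matrix

variable {A B A' B' : Type} [Fintype A] [Fintype B] [Fintype A'] [Fintype B']
variable [DecidableEq A] [DecidableEq B]

lemma tensorMap_stdB (E : Matrix A A ℂ →ₗ[ℂ] Matrix A' A' ℂ)
    (F : Matrix B B ℂ →ₗ[ℂ] Matrix B' B' ℂ) (i j : A) (p q : B) :
    tensorMap E F (Matrix.single ((i, p)) ((j, q)) 1)
      = Matrix.of fun (z1 z2 : A' × B') =>
          F (Matrix.single p q 1) z1.2 z2.2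
            * E (Matrix.single i j 1) z1.1 z2.1 := by
  ext z1 z2
  obtain ⟨a, b⟩ := z1
  obtain ⟨a', b'⟩ := z2
  have h0 : tensorMap E F (Matrix.single ((i, p)) ((j, q)) 1) (a, b) (a', b')
      = E (Matrix.of fun i' j' =>
          F (Matrix.of fun p' q' =>
            Matrix.single ((i, p)) ((j, q)) (1 : ℂ) (i', p') (j', q')) b b') a a'
      := rfl
  rw [h0]
  have h1 : (Matrix.of fun i' j' =>
      F (Matrix.of fun p' q' =>
        Matrix.single ((i, p)) ((j, q)) (1 : ℂ) (i', p') (j', q')) b b')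
      = (F (Matrix.single p q 1) b b') • Matrix.single i j 1 := by
    ext i' j'
    by_cases hij : i = i' ∧ j = j'
    · obtain ⟨rfl, rfl⟩ := hij
      have h2 : (Matrix.of fun p' q' =>
          Matrix.single ((i, p)) ((j, q)) (1 : ℂ) (i, p') (j, q'))
          = Matrix.single p q 1 := by
        ext p' q'
        simp [Matrix.single, Prod.ext_iff]
      rw [Matrix.of_apply, h2]
      simp [Matrix.single]
    · have h2 : (Matrix.of fun p' q' =>
          Matrix.single ((i, p)) ((j, q)) (1 : ℂ) (i', p') (j', q')) = 0 := by
        ext p' q'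
        rw [Matrix.of_apply, Matrix.single, Matrix.of_apply]
        rw [if_neg]
        · rfl
        · rintro ⟨h3, h4⟩
          exact hij ⟨congrArg Prod.fst h3, congrArg Prod.fst h4⟩
      rw [Matrix.of_apply, h2, map_zero]
      have : Matrix.single i j (1 : ℂ) i' j' = 0 := by
        rw [Matrix.single, Matrix.of_apply, if_neg hij]
      simp [this]
  rw [h1, _root_.map_smul, Matrix.smul_apply, smul_eq_mul, Matrix.of_apply]

end AuxTM
noncomputable section AuxComb

open Matrix

lemma boole_mul_boole (P Q : Prop) [Decidable P] [Decidable Q] :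
    (if P then (1 : ℂ) else 0) * (if Q then 1 else 0) = if P ∧ Q then 1 else 0 := by
  by_cases hP : P <;> by_cases hQ : Q <;> simp [hP, hQ]

lemma ite_ite_and (P Q : Prop) [Decidable P] [Decidable Q] (x : ℂ) :
    (if P then (if Q then x else 0) else 0) = if P ∧ Q then x else 0 := by
  by_cases hP : P <;> by_cases hQ : Q <;> simp [hP, hQ]

lemma sum_update_factor {B' : Type} [Fintype B'] [DecidableEq B'] {k : ℕ} (t0 : Fin k)
    (b : B') (g : Fin k → B' → ℂ) :
    ∑ f : Fin k → B', (if f t0 = b then ∏ t, g t (f t) else 0)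
      = g t0 b * ∏ t ∈ Finset.univ.erase t0, (∑ c, g t c) := by
  classical
  have hD : ∀ f : Fin k → B', (if f t0 = b then ∏ t, g t (f t) else 0)
      = ∏ t, (fun t x => if t = t0 then (if x = b then g t x else 0) else g t x) t (f t) := by
    intro f
    by_cases h : f t0 = b
    · rw [if_pos h]
      refine Finset.prod_congr rfl fun t _ => ?_
      by_cases ht : t = t0
      · subst ht; simp [h]
      · simp [ht]
    · rw [if_neg h]
      refine (Finset.prod_eq_zero (Finset.mem_univ t0) ?_).symm
      simp [h]
  simp_rw [hD]
  rw [← Fintype.prod_sum (fun t x => if t = t0 then (if x = b then g t x else 0) else g t x)]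
  rw [← Finset.mul_prod_erase Finset.univ _ (Finset.mem_univ t0)]
  congr 1
  · simp
  · refine Finset.prod_congr rfl fun t ht => ?_
    have ht0 : t ≠ t0 := (Finset.mem_erase.mp ht).1
    refine Finset.sum_congr rfl fun c _ => ?_
    rw [if_neg ht0]

/-- the marginal of a standard basis matrix. -/
lemma marginalFirst_stdB {A B : Type} [Fintype A] [DecidableEq A] [Fintype B]
    [DecidableEq B] {k : ℕ} (hk : 0 < k) (z1 z2 : A × (Fin k → B)) :
    marginalFirst hk (Matrix.single z1 z2 1)
      = (∏ t ∈ Finset.univ.erase ⟨0, hk⟩, if z1.2 t = z2.2 t then (1 : ℂ) else 0)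
          • Matrix.single (z1.1, z1.2 ⟨0, hk⟩) (z2.1, z2.2 ⟨0, hk⟩) 1 := by
  classical
  set t0 : Fin k := ⟨0, hk⟩
  ext p q
  obtain ⟨a1, b1⟩ := p
  obtain ⟨a2, b2⟩ := q
  show (∑ f : Fin k → B, if f t0 = b1
      then Matrix.single z1 z2 (1 : ℂ) (a1, f) (a2, Function.update f t0 b2) else 0)
    = _
  rw [Finset.sum_eq_single z1.2
    (fun f _ hf => by
      by_cases h : f t0 = b1
      · rw [if_pos h, Matrix.single, Matrix.of_apply, if_neg]
        rintro ⟨h1, -⟩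
        exact hf (congrArg Prod.snd h1).symm
      · rw [if_neg h])
    (fun hmem => absurd (Finset.mem_univ _) hmem)]
  simp only [Matrix.single, Matrix.of_apply, Matrix.smul_apply, smul_eq_mul,
    ite_ite_and, Finset.prod_boole, boole_mul_boole]
  congr! 1
  constructor
  · rintro ⟨h1, h2, h3⟩
    have e1 : z1.1 = a1 := by rw [h2]
    have e2 : z2.1 = a2 := by rw [h3]
    have e3 : z2.2 = Function.update z1.2 t0 b2 := by rw [h3]
    refine ⟨fun t ht => ?_, ?_, ?_⟩
    · rw [e3, Function.update_of_ne (Finset.mem_erase.mp ht).1]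
    · exact Prod.ext_iff.mpr ⟨e1, h1⟩
    · refine Prod.ext_iff.mpr ⟨e2, ?_⟩
      rw [e3]
      simp
  · rintro ⟨hprod, hA, hB⟩
    have e1 := (Prod.ext_iff.mp hA).1
    have h1 := (Prod.ext_iff.mp hA).2
    have e2 := (Prod.ext_iff.mp hB).1
    have e3 := (Prod.ext_iff.mp hB).2
    refine ⟨h1, Prod.ext_iff.mpr ⟨e1, rfl⟩, Prod.ext_iff.mpr ⟨e2, funext fun t => ?_⟩⟩
    show z2.2 t = Function.update z1.2 t0 b2 t
    by_cases ht : t = t0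
    · subst ht
      rw [Function.update_self]
      exact e3
    · rw [Function.update_of_ne ht]
      exact (hprod t (Finset.mem_erase.mpr ⟨ht, Finset.mem_univ t⟩)).symm

lemma permAction_apply {A B : Type} {k : ℕ} (π : Equiv.Perm (Fin k))
    (ω : Matrix (A × (Fin k → B)) (A × (Fin k → B)) ℂ) (p q : A × (Fin k → B)) :
    permAction π ω p q = ω (p.1, p.2 ∘ π) (q.1, q.2 ∘ π) := rfl

lemma marginalFirst_apply {A B : Type} [Fintype B] [DecidableEq B] {k : ℕ} (hk : 0 < k)
    (ω : Matrix (A × (Fin k → B)) (A × (Fin k → B)) ℂ) (p q : A × B) :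
    marginalFirst hk ω p q = ∑ f : Fin k → B,
      if f ⟨0, hk⟩ = p.2 then ω (p.1, f) (q.1, Function.update f ⟨0, hk⟩ q.2) else 0 := rfl

/-- `marginalFirst` as a linear map. -/
def margLin {A B : Type} [Fintype A] [Fintype B] [DecidableEq B] {k : ℕ} (hk : 0 < k) :
    Matrix (A × (Fin k → B)) (A × (Fin k → B)) ℂ →ₗ[ℂ] Matrix (A × B) (A × B) ℂ where
  toFun := marginalFirst hk
  map_add' X Y := by
    ext p q
    show marginalFirst hk (X + Y) p q = (marginalFirst hk X + marginalFirst hk Y) p q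
    rw [Matrix.add_apply, marginalFirst_apply, marginalFirst_apply, marginalFirst_apply,
      ← Finset.sum_add_distrib]
    refine Finset.sum_congr rfl fun f _ => ?_
    by_cases h : f ⟨0, hk⟩ = p.2 <;> simp [h]
  map_smul' c X := by
    ext p q
    show marginalFirst hk (c • X) p q = (c • marginalFirst hk X) p q
    rw [Matrix.smul_apply, marginalFirst_apply, marginalFirst_apply,
      smul_eq_mul, Finset.mul_sum]
    refine Finset.sum_congr rfl fun f _ => ?_
    by_cases h : f ⟨0, hk⟩ = p.2 <;> simp [h]

end AuxComb
noncomputable section AuxBigM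

open Matrix

variable {A B A' B' : Type} [Fintype A] [DecidableEq A] [Fintype B] [DecidableEq B]
  [Fintype A'] [Fintype B'] {m : ℕ}

/-- The extension channel `∑_y E_y ⊗ F_y^{⊗ k}`, written entrywise. -/
def bigM (k : ℕ) (E : Fin m → (Matrix A A ℂ →ₗ[ℂ] Matrix A' A' ℂ))
    (F : Fin m → (Matrix B B ℂ →ₗ[ℂ] Matrix B' B' ℂ)) :
    Matrix (A × (Fin k → B)) (A × (Fin k → B)) ℂ →ₗ[ℂ]
      Matrix (A' × (Fin k → B')) (A' × (Fin k → B')) ℂ where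
  toFun X := Matrix.of fun p q => ∑ y, ∑ z1 : A × (Fin k → B), ∑ z2 : A × (Fin k → B),
    X z1 z2 * (E y (Matrix.single z1.1 z2.1 1) p.1 q.1 *
      ∏ t, F y (Matrix.single (z1.2 t) (z2.2 t) 1) (p.2 t) (q.2 t))
  map_add' X Y := by
    ext p q
    simp only [Matrix.add_apply, Matrix.of_apply, add_mul, Finset.sum_add_distrib]
  map_smul' c X := by
    ext p q
    simp only [Matrix.smul_apply, Matrix.of_apply, smul_eq_mul, RingHom.id_apply,
      Finset.mul_sum, mul_assoc]

lemma bigM_apply (k : ℕ) (E : Fin m → (Matrix A A ℂ →ₗ[ℂ] Matrix A' A' ℂ))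
    (F : Fin m → (Matrix B B ℂ →ₗ[ℂ] Matrix B' B' ℂ))
    (X : Matrix (A × (Fin k → B)) (A × (Fin k → B)) ℂ)
    (p q : A' × (Fin k → B')) :
    bigM k E F X p q = ∑ y, ∑ z1 : A × (Fin k → B), ∑ z2 : A × (Fin k → B),
      X z1 z2 * (E y (Matrix.single z1.1 z2.1 1) p.1 q.1 *
        ∏ t, F y (Matrix.single (z1.2 t) (z2.2 t) 1) (p.2 t) (q.2 t)) := rfl

lemma bigM_stdB (k : ℕ) (E : Fin m → (Matrix A A ℂ →ₗ[ℂ] Matrix A' A' ℂ))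
    (F : Fin m → (Matrix B B ℂ →ₗ[ℂ] Matrix B' B' ℂ))
    (w1 w2 : A × (Fin k → B)) :
    bigM k E F (Matrix.single w1 w2 1)
      = Matrix.of fun p q => ∑ y,
          E y (Matrix.single w1.1 w2.1 1) p.1 q.1 *
            ∏ t, F y (Matrix.single (w1.2 t) (w2.2 t) 1) (p.2 t) (q.2 t) := by
  ext p q
  rw [bigM_apply, Matrix.of_apply]
  refine Finset.sum_congr rfl fun y _ => ?_
  rw [Finset.sum_eq_single w1
    (fun z1 _ hz1 => Finset.sum_eq_zero fun z2 _ => by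
      rw [Matrix.single, Matrix.of_apply, if_neg, zero_mul]
      rintro ⟨h1, -⟩
      exact hz1 h1.symm)
    (fun hmem => absurd (Finset.mem_univ _) hmem)]
  rw [Finset.sum_eq_single w2
    (fun z2 _ hz2 => by
      rw [Matrix.single, Matrix.of_apply, if_neg, zero_mul]
      rintro ⟨-, h2⟩
      exact hz2 h2.symm)
    (fun hmem => absurd (Finset.mem_univ _) hmem)]
  rw [Matrix.single, Matrix.of_apply, if_pos ⟨rfl, rfl⟩, one_mul]

lemma bigM_trace (k : ℕ) {E : Fin m → (Matrix A A ℂ →ₗ[ℂ] Matrix A' A' ℂ)}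
    {F : Fin m → (Matrix B B ℂ →ₗ[ℂ] Matrix B' B' ℂ)}
    (hEtr : ∀ X : Matrix A A ℂ, (∑ y, (E y) X).trace = X.trace)
    (hFtr : ∀ y (X : Matrix B B ℂ), ((F y) X).trace = X.trace) :
    ∀ X, ((bigM k E F) X).trace = X.trace := by
  refine trace_eq_of_stdB (fun w1 w2 => ?_)
  rw [bigM_stdB]
  show (∑ p : A' × (Fin k → B'), ∑ y, E y (Matrix.single w1.1 w2.1 1) p.1 p.1
      * ∏ t, F y (Matrix.single (w1.2 t) (w2.2 t) 1) (p.2 t) (p.2 t)) = _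
  rw [Finset.sum_comm]
  have step : ∀ y : Fin m, (∑ p : A' × (Fin k → B'),
      E y (Matrix.single w1.1 w2.1 1) p.1 p.1
        * ∏ t, F y (Matrix.single (w1.2 t) (w2.2 t) 1) (p.2 t) (p.2 t))
      = (E y (Matrix.single w1.1 w2.1 1)).trace
          * (if w1.2 = w2.2 then 1 else 0) := by
    intro y
    rw [Fintype.sum_prod_type]
    show (∑ a : A', ∑ f : Fin k → B', E y (Matrix.single w1.1 w2.1 1) a a
      * ∏ t, F y (Matrix.single (w1.2 t) (w2.2 t) 1) (f t) (f t)) = _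
    rw [← Finset.sum_mul_sum]
    congr 1
    rw [← Fintype.prod_sum fun t c => F y (Matrix.single (w1.2 t) (w2.2 t) 1) c c]
    have hper : ∀ t : Fin k, (∑ c, F y (Matrix.single (w1.2 t) (w2.2 t) 1) c c)
        = if w1.2 t = w2.2 t then (1 : ℂ) else 0 := by
      intro t
      have h1 : (∑ c, F y (Matrix.single (w1.2 t) (w2.2 t) 1) c c)
          = (F y (Matrix.single (w1.2 t) (w2.2 t) 1)).trace := rfl
      rw [h1, hFtr, trace_stdB]
    rw [Finset.prod_congr rfl fun t _ => hper t, Finset.prod_boole]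
    congr! 1
    constructor
    · intro h
      exact funext fun t => h t (Finset.mem_univ t)
    · intro h t _
      rw [h]
  rw [Finset.sum_congr rfl fun y _ => step y]
  rw [← Finset.sum_mul]
  have h2 : (∑ y, (E y (Matrix.single w1.1 w2.1 1)).trace)
      = if w1.1 = w2.1 then (1 : ℂ) else 0 := by
    rw [← Matrix.trace_sum, hEtr, trace_stdB]
  rw [h2, boole_mul_boole, trace_stdB]
  congr! 1
  exact Prod.ext_iff.symm

lemma bigM_perm (k : ℕ) (E : Fin m → (Matrix A A ℂ →ₗ[ℂ] Matrix A' A' ℂ))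
    (F : Fin m → (Matrix B B ℂ →ₗ[ℂ] Matrix B' B' ℂ))
    (π : Equiv.Perm (Fin k)) (X : Matrix (A × (Fin k → B)) (A × (Fin k → B)) ℂ) :
    bigM k E F (permAction π X) = permAction π (bigM k E F X) := by
  ext p q
  rw [permAction_apply, bigM_apply, bigM_apply]
  refine Finset.sum_congr rfl fun y _ => ?_
  have hbij : Function.Bijective
      (fun z : A × (Fin k → B) => ((z.1, z.2 ∘ π) : A × (Fin k → B))) :=
    (Equiv.prodCongr (Equiv.refl A) (Equiv.arrowCongr π.symm (Equiv.refl B))).bijective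
  refine Fintype.sum_bijective _ hbij _ _ fun z1 => ?_
  refine Fintype.sum_bijective _ hbij _ _ fun z2 => ?_
  rw [permAction_apply]
  congr 1
  congr 1
  exact (Equiv.prod_comp π fun t =>
    F y (Matrix.single (z1.2 t) (z2.2 t) 1) (p.2 t) (q.2 t)).symm

end AuxBigM
noncomputable section AuxMarg

open Matrix

variable {A B A' B' : Type} [Fintype A] [DecidableEq A] [Fintype B] [DecidableEq B]
  [Fintype A'] [DecidableEq A'] [Fintype B'] [DecidableEq B'] {m : ℕ}

lemma bigM_marg (k : ℕ) (hk : 0 < k)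
    (E : Fin m → (Matrix A A ℂ →ₗ[ℂ] Matrix A' A' ℂ))
    (F : Fin m → (Matrix B B ℂ →ₗ[ℂ] Matrix B' B' ℂ))
    (hFtr : ∀ y (X : Matrix B B ℂ), ((F y) X).trace = X.trace) :
    ∀ X, marginalFirst hk (bigM k E F X)
      = (∑ y, tensorMap (E y) (F y)) (marginalFirst hk X) := by
  have base : ∀ w1 w2 : A × (Fin k → B),
      (margLin hk ∘ₗ bigM k E F) (Matrix.single w1 w2 1)
      = ((∑ y, tensorMap (E y) (F y)) ∘ₗ margLin hk) (Matrix.single w1 w2 1) := by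
    intro w1 w2
    set t0 : Fin k := ⟨0, hk⟩ with ht0
    rw [LinearMap.comp_apply, LinearMap.comp_apply]
    show marginalFirst hk (bigM k E F (Matrix.single w1 w2 1))
      = (∑ y, tensorMap (E y) (F y)) (marginalFirst hk (Matrix.single w1 w2 1))
    rw [bigM_stdB, marginalFirst_stdB, _root_.map_smul]
    ext p q
    obtain ⟨a, b⟩ := p
    obtain ⟨a', b'⟩ := q
    rw [Matrix.smul_apply]
    simp only [LinearMap.sum_apply, Matrix.sum_apply, tensorMap_stdB, Matrix.of_apply,
      smul_eq_mul]
    -- RHS is now `c * ∑ y, F y (...) b b' * E y (...) a a'`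
    rw [marginalFirst_apply]
    -- LHS: sum over f of the entry of the bigM basis image
    have h1 : ∀ f : Fin k → B',
        (if f t0 = b then (Matrix.of fun p q => ∑ y,
            E y (Matrix.single w1.1 w2.1 1) p.1 q.1 *
              ∏ t, F y (Matrix.single (w1.2 t) (w2.2 t) 1) (p.2 t) (q.2 t))
          ((a, f)) ((a', Function.update f t0 b')) else 0)
        = ∑ y, E y (Matrix.single w1.1 w2.1 1) a a' *
            (if f t0 = b then
              ∏ t, F y (Matrix.single (w1.2 t) (w2.2 t) 1) (f t)
                (if t = t0 then b' else f t) else 0) := by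
      intro f
      by_cases h : f t0 = b
      · simp only [Matrix.of_apply, if_pos h, Finset.mul_sum]
        refine Finset.sum_congr rfl fun y _ => ?_
        simp only [Function.update_apply]
      · simp [h]
    rw [Finset.sum_congr rfl fun f _ => h1 f, Finset.sum_comm]
    have h2 : ∀ y : Fin m, (∑ f : Fin k → B',
        E y (Matrix.single w1.1 w2.1 1) a a' *
          (if f t0 = b then ∏ t, F y (Matrix.single (w1.2 t) (w2.2 t) 1) (f t)
            (if t = t0 then b' else f t) else 0))
        = E y (Matrix.single w1.1 w2.1 1) a a' *
            (F y (Matrix.single (w1.2 t0) (w2.2 t0) 1) b b' *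
              ∏ t ∈ Finset.univ.erase t0, if w1.2 t = w2.2 t then (1 : ℂ) else 0) := by
      intro y
      rw [← Finset.mul_sum]
      congr 1
      rw [sum_update_factor t0 b (fun t x =>
        F y (Matrix.single (w1.2 t) (w2.2 t) 1) x (if t = t0 then b' else x))]
      congr 1
      refine Finset.prod_congr rfl fun t ht => ?_
      have htne : t ≠ t0 := (Finset.mem_erase.mp ht).1
      have h3 : (∑ c, F y (Matrix.single (w1.2 t) (w2.2 t) 1) c
          (if t = t0 then b' else c))
          = (F y (Matrix.single (w1.2 t) (w2.2 t) 1)).trace := by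
        refine Finset.sum_congr rfl fun c _ => ?_
        rw [if_neg htne]
        rfl
      rw [h3, hFtr, trace_stdB]
    rw [Finset.sum_congr rfl fun y _ => h2 y, Finset.mul_sum]
    refine Finset.sum_congr rfl fun y _ => ?_
    ring
  intro X
  exact eq_of_stdB base X

end AuxMarg
noncomputable section AuxKrausBig

open Matrix

variable {A B A' B' : Type} [Fintype A] [DecidableEq A] [Fintype B] [DecidableEq B]
  [Fintype A'] [Fintype B'] {m : ℕ}

lemma bigM_hasKraus (k : ℕ) (E : Fin m → (Matrix A A ℂ →ₗ[ℂ] Matrix A' A' ℂ))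
    (F : Fin m → (Matrix B B ℂ →ₗ[ℂ] Matrix B' B' ℂ))
    {ιE : Fin m → Type} (instE : ∀ y, Fintype (ιE y))
    {ιF : Fin m → Type} (instF : ∀ y, Fintype (ιF y))
    (KE : ∀ y, ιE y → Matrix A' A ℂ) (KF : ∀ y, ιF y → Matrix B' B ℂ)
    (hKE : ∀ y X, E y X = ∑ r, KE y r * X * (KE y r)ᴴ)
    (hKF : ∀ y X, F y X = ∑ s, KF y s * X * (KF y s)ᴴ) :
    HasKraus (bigM k E F) := by
  classical
  letI : ∀ y, Fintype (ιE y) := instE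
  letI : ∀ y, Fintype (ιF y) := instF
  set G : ((y : Fin m) × (ιE y × (Fin k → ιF y))) →
      Matrix (A' × (Fin k → B')) (A × (Fin k → B)) ℂ :=
    fun w => Matrix.of fun p q =>
      KE w.1 w.2.1 p.1 q.1 * ∏ t, KF w.1 (w.2.2 t) (p.2 t) (q.2 t) with hG
  refine ⟨(y : Fin m) × (ιE y × (Fin k → ιF y)), inferInstance, G, ?_⟩
  have key : ∀ X, bigM k E F X = krausLin G X := by
    refine eq_of_stdB fun w1 w2 => ?_
    ext p q
    rw [bigM_stdB, Matrix.of_apply,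
      kraus_stdB (K := G) (fun _ => rfl) w1 w2 p q]
    rw [← Finset.univ_sigma_univ, Finset.sum_sigma]
    refine Finset.sum_congr rfl fun y _ => ?_
    rw [kraus_stdB (hKE y) w1.1 w2.1 p.1 q.1]
    have hF : ∀ t : Fin k, F y (Matrix.single (w1.2 t) (w2.2 t) 1) (p.2 t) (q.2 t)
        = ∑ s, KF y s (p.2 t) (w1.2 t) * (starRingEnd ℂ) (KF y s (q.2 t) (w2.2 t)) :=
      fun t => kraus_stdB (hKF y) (w1.2 t) (w2.2 t) (p.2 t) (q.2 t)
    rw [Finset.prod_congr rfl fun t _ => hF t]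
    rw [Fintype.prod_sum fun t s => KF y s (p.2 t) (w1.2 t)
      * (starRingEnd ℂ) (KF y s (q.2 t) (w2.2 t))]
    rw [Finset.sum_mul_sum]
    rw [Fintype.sum_prod_type]
    refine Finset.sum_congr rfl fun r _ => Finset.sum_congr rfl fun sf _ => ?_
    show _ = G ⟨y, (r, sf)⟩ p w1 * (starRingEnd ℂ) (G ⟨y, (r, sf)⟩ q w2)
    rw [hG]
    simp only [Matrix.of_apply, _root_.map_mul, map_prod]
    rw [Finset.prod_mul_distrib, mul_assoc]
    ring
  intro X
  rw [key]
  rfl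

end AuxKrausBig
noncomputable section AuxLTrace

open Matrix

variable {A B A' B' : Type} [Fintype A] [DecidableEq A] [Fintype B] [DecidableEq B]
  [Fintype A'] [Fintype B'] {m : ℕ}

lemma L_trace (E : Fin m → (Matrix A A ℂ →ₗ[ℂ] Matrix A' A' ℂ))
    (F : Fin m → (Matrix B B ℂ →ₗ[ℂ] Matrix B' B' ℂ))
    (hEtr : ∀ X : Matrix A A ℂ, (∑ y, (E y) X).trace = X.trace)
    (hFtr : ∀ y (X : Matrix B B ℂ), ((F y) X).trace = X.trace) :
    ∀ X : Matrix (A × B) (A × B) ℂ,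
      ((∑ y, tensorMap (E y) (F y)) X).trace = X.trace := by
  refine trace_eq_of_stdB fun w1 w2 => ?_
  obtain ⟨i, p⟩ := w1
  obtain ⟨j, q⟩ := w2
  rw [LinearMap.sum_apply, Matrix.trace_sum]
  have step : ∀ y : Fin m, (tensorMap (E y) (F y)
        (Matrix.single ((i, p)) ((j, q)) 1)).trace
      = (if p = q then 1 else 0) * (E y (Matrix.single i j 1)).trace := by
    intro y
    rw [tensorMap_stdB]
    show (∑ z : A' × B', F y (Matrix.single p q 1) z.2 z.2
        * E y (Matrix.single i j 1) z.1 z.1) = _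
    rw [Fintype.sum_prod_type]
    show (∑ a : A', ∑ b : B', F y (Matrix.single p q 1) b b
        * E y (Matrix.single i j 1) a a) = _
    rw [Finset.sum_comm, ← Finset.sum_mul_sum]
    congr 1
    have h1 : (∑ b : B', F y (Matrix.single p q 1) b b)
        = (F y (Matrix.single p q 1)).trace := rfl
    rw [h1, hFtr, trace_stdB]
  rw [Finset.sum_congr rfl fun y _ => step y, ← Finset.mul_sum, ← Matrix.trace_sum,
    hEtr, trace_stdB, trace_stdB, boole_mul_boole]
  congr! 1
  rw [Prod.ext_iff]
  tauto

end AuxLTrace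
/-- every one-way LOCC channel from `A` to `B` is a `k`-extendible bipartite
channel, for every `k ≥ 2`. -/
theorem oneWayLOCC_kExtendible
    {A B A' B' : Type} [Fintype A] [DecidableEq A] [Fintype B] [DecidableEq B]
    [Fintype A'] [DecidableEq A'] [Fintype B'] [DecidableEq B']
    (k : ℕ) (hk : 2 ≤ k)
    (L : Matrix (A × B) (A × B) ℂ →ₗ[ℂ] Matrix (A' × B') (A' × B') ℂ)
    (hL : IsOneWayLOCC L) :
    kExtendibleChannel k hk L := by
  classical
  obtain ⟨m, E, F, hEcp, hEtr, hFcptp, hLdef⟩ := hL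
  choose ιE instE KE hKE using fun y => (hEcp y).hasKraus
  choose ιF instF KF hKF using fun y => (hFcptp y).1.hasKraus
  constructor
  · constructor
    · rw [hLdef]
      exact isCP_sum Finset.univ _ fun y _ => (hEcp y).tensorMap (hFcptp y).1
    · intro X
      rw [hLdef]
      exact L_trace E F hEtr (fun y => (hFcptp y).2) X
  · refine ⟨bigM k E F, ⟨?_, ?_⟩, ?_, ?_⟩
    · exact (bigM_hasKraus k E F instE instF KE KF hKE hKF).isCP
    · exact bigM_trace k hEtr fun y => (hFcptp y).2
    · intro θ _
      rw [hLdef]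
      exact bigM_marg k (by omega) E F (fun y => (hFcptp y).2) θ
    · intro π θ
      exact bigM_perm k E F π θ
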